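/- Suppose that for every t ∈ {0, …, T}, Y_t is conditionally independent of X_{τ(t)} given the tuple (Y_0, …, Y_{t−1}). Then for every t ∈ {0, …, T}, Y_t is conditionally independent of the tuple (X_j)_{j ∈ 𝒫 ∩ {0, …, t}} given (Y_0, …, Y_{t−1}). -/

import Mathlib

/-!
Fix `t` and put `s = τ t`. By the Markov property the chain before `s` is conditionally
independent of the chain on `(s, t]` given `X s`, and since the keys are independent of the chain
and of each other this survives adjoining the keys `F i`, `i < s`, to the past and the keys `F i`,
`s ≤ i ≤ t`, to the future. The queries before `s` are functions of that past, while `τ` is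
constantly `s` on `[s, t]`, so `Y s, …, Y t` are functions of `X s`, the earlier queries and the
future. Two applications of weak union then make `Y t` conditionally independent of
`(X j)_{j < s}` given the past queries and `X s`, and contracting this with the hypothesis
`Y t ⫫ X s | past queries` gives independence from `(X j)_{j ≤ s}`, which contains the private
trace up to `t`.
-/

open MeasureTheory ProbabilityTheory Set

section PiSystem

variable {Ω : Type*}

lemma IsPiSystem.image2_inter {S T : Set (Set Ω)} (hS : IsPiSystem S) (hT : IsPiSystem T) :
    IsPiSystem (image2 (· ∩ ·) S T) := by
  rintro _ ⟨s₁, hs₁, t₁, ht₁, rfl⟩ _ ⟨s₂, hs₂, t₂, ht₂, rfl⟩ hne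
  rw [inter_inter_inter_comm] at hne ⊢
  exact mem_image2_of_mem (hS _ hs₁ _ hs₂ (hne.mono inter_subset_left))
    (hT _ ht₁ _ ht₂ (hne.mono inter_subset_right))

lemma MeasurableSpace.generateFrom_image2_inter (m₁ m₂ : MeasurableSpace Ω) :
    generateFrom (image2 (· ∩ ·) {s | MeasurableSet[m₁] s} {s | MeasurableSet[m₂] s})
      = m₁ ⊔ m₂ := by
  refine le_antisymm (generateFrom_le ?_) (sup_le (fun s hs => ?_) (fun s hs => ?_))
  · rintro _ ⟨s₁, hs₁, s₂, hs₂, rfl⟩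
    exact (le_sup_left (b := m₂) _ hs₁).inter (le_sup_right (a := m₁) _ hs₂)
  · exact measurableSet_generateFrom ⟨s, hs, univ, .univ, inter_univ s⟩
  · exact measurableSet_generateFrom ⟨univ, .univ, s, hs, univ_inter s⟩

end PiSystem

section SetIntegral

variable {Ω E : Type*} [NormedAddCommGroup E] [NormedSpace ℝ E]
  {m₁ m₂ mΩ : MeasurableSpace Ω} {μ : Measure Ω}

lemma setIntegral_eq_of_forall_inter (hm₁ : m₁ ≤ mΩ) (hm₂ : m₂ ≤ mΩ) {f g : Ω → E}
    (hf : Integrable f μ) (hg : Integrable g μ)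
    (h : ∀ s₁ s₂, MeasurableSet[m₁] s₁ → MeasurableSet[m₂] s₂ →
      ∫ x in s₁ ∩ s₂, f x ∂μ = ∫ x in s₁ ∩ s₂, g x ∂μ)
    {s : Set Ω} (hs : MeasurableSet[m₁ ⊔ m₂] s) : ∫ x in s, f x ∂μ = ∫ x in s, g x ∂μ := by
  have hle : m₁ ⊔ m₂ ≤ mΩ := sup_le hm₁ hm₂
  induction s, hs using MeasurableSpace.induction_on_inter
    (MeasurableSpace.generateFrom_image2_inter m₁ m₂).symm
    ((@MeasurableSpace.isPiSystem_measurableSet Ω m₁).image2_inter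
      (@MeasurableSpace.isPiSystem_measurableSet Ω m₂)) with
  | empty => simp
  | basic _ hs =>
    obtain ⟨s₁, hs₁, s₂, hs₂, rfl⟩ := hs
    exact h s₁ s₂ hs₁ hs₂
  | compl s hs ih =>
    have h_univ := h univ univ .univ .univ
    rw [inter_univ, setIntegral_univ, setIntegral_univ] at h_univ
    rw [setIntegral_compl (hle s hs) hf, setIntegral_compl (hle s hs) hg, h_univ, ih]
  | iUnion s hdisj hs ih =>
    rw [integral_iUnion (fun i => hle _ (hs i)) hdisj hf.integrableOn,
      integral_iUnion (fun i => hle _ (hs i)) hdisj hg.integrableOn]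
    exact tsum_congr ih

end SetIntegral

lemma mul_indicator_one_eq_indicator {Ω M : Type*} [MulZeroOneClass M] (B : Set Ω) (f : Ω → M) :
    f * B.indicator 1 = B.indicator f := by
  ext ω; by_cases h : ω ∈ B <;> simp [h]

namespace ProbabilityTheory

section CondExpIndicator

variable {Ω : Type*} {m mΩ : MeasurableSpace Ω} {μ : Measure Ω} [IsFiniteMeasure μ]

lemma condExp_mul_indicator_one (hm : m ≤ mΩ) (A : Set Ω) {B : Set Ω} (hB : MeasurableSet B) :
    μ[μ⟦A | m⟧ * B.indicator 1 | m] =ᵐ[μ] μ⟦A | m⟧ * μ⟦B | m⟧ :=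
  condExp_stronglyMeasurable_mul_of_bound hm stronglyMeasurable_condExp
    ((integrable_const 1).indicator hB) 1
    (ae_bdd_abs_condExp_of_ae_bdd_abs (R := (1 : ℝ)) (.of_forall fun ω => by
      by_cases hω : ω ∈ A <;> simp [hω]))

end CondExpIndicator

section CondIndep

variable {Ω : Type*} {m' m'' m₁ m₂ m₃ mΩ : MeasurableSpace Ω} [StandardBorelSpace Ω]
  {μ : Measure Ω} [IsFiniteMeasure μ]

lemma condIndep_iff_condExp_sup_ae_eq (hm' : m' ≤ mΩ) (hm₁ : m₁ ≤ mΩ) (hm₂ : m₂ ≤ mΩ) :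
    CondIndep m' m₁ m₂ hm' μ ↔
      ∀ A, MeasurableSet[m₁] A → μ⟦A | m' ⊔ m₂⟧ =ᵐ[μ] μ⟦A | m'⟧ := by
  have hsup : m' ⊔ m₂ ≤ mΩ := sup_le hm' hm₂
  rw [condIndep_iff m' m₁ m₂ hm' hm₁ hm₂ μ]
  constructor
  · intro h A hA
    have hA' := hm₁ A hA
    refine (ae_eq_condExp_of_forall_setIntegral_eq hsup ((integrable_const 1).indicator hA')
      (fun s _ _ => integrable_condExp.integrableOn) (fun s hs _ => ?_)
      (stronglyMeasurable_condExp.mono (le_sup_left : m' ≤ m' ⊔ m₂)).aestronglyMeasurable).symm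
    refine setIntegral_eq_of_forall_inter hm' hm₂ integrable_condExp
      ((integrable_const 1).indicator hA') (fun s₁ s₂ hs₁ hs₂ => ?_) hs
    have hs₂' := hm₂ s₂ hs₂
    calc ∫ x in s₁ ∩ s₂, (μ⟦A | m'⟧) x ∂μ
        = ∫ x in s₁, (μ⟦A | m'⟧ * s₂.indicator 1 : Ω → ℝ) x ∂μ := by
          rw [mul_indicator_one_eq_indicator, setIntegral_indicator hs₂']
      _ = ∫ x in s₁, μ[μ⟦A | m'⟧ * s₂.indicator 1 | m'] x ∂μ := by
          refine (setIntegral_condExp hm' ?_ hs₁).symm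
          rw [mul_indicator_one_eq_indicator]
          exact integrable_condExp.indicator hs₂'
      _ = ∫ x in s₁, (μ⟦A ∩ s₂ | m'⟧) x ∂μ := setIntegral_congr_ae (hm' s₁ hs₁) <| by
          filter_upwards [condExp_mul_indicator_one hm' A hs₂', h A s₂ hA hs₂] with ω h₁ h₂ _
          rw [h₁, h₂]
      _ = ∫ x in s₁ ∩ s₂, A.indicator (fun _ => (1 : ℝ)) x ∂μ := by
          rw [setIntegral_condExp hm' ((integrable_const 1).indicator (hA'.inter hs₂')) hs₁,
            inter_comm, ← indicator_indicator, setIntegral_indicator hs₂']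
  · intro h t₁ t₂ ht₁ ht₂
    have ht₂' : MeasurableSet[m' ⊔ m₂] t₂ := le_sup_right (a := m') t₂ ht₂
    calc μ⟦t₁ ∩ t₂ | m'⟧
        =ᵐ[μ] μ[μ⟦t₁ ∩ t₂ | m' ⊔ m₂⟧ | m'] := (condExp_condExp_of_le le_sup_left hsup).symm
      _ =ᵐ[μ] μ[μ⟦t₁ | m' ⊔ m₂⟧ * t₂.indicator 1 | m'] := by
          have h_int : Integrable (t₁.indicator 1 * t₂.indicator 1 : Ω → ℝ) μ := by
            rw [← inter_indicator_one]
            exact (integrable_const 1).indicator ((hm₁ t₁ ht₁).inter (hm₂ t₂ ht₂))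
          refine condExp_congr_ae ?_
          rw [show (t₁ ∩ t₂).indicator (fun _ => (1 : ℝ)) = t₁.indicator 1 * t₂.indicator 1
            from inter_indicator_one]
          exact condExp_mul_of_stronglyMeasurable_right (stronglyMeasurable_one.indicator ht₂')
            h_int ((integrable_const 1).indicator (hm₁ t₁ ht₁))
      _ =ᵐ[μ] μ[μ⟦t₁ | m'⟧ * t₂.indicator 1 | m'] :=
          condExp_congr_ae ((h t₁ ht₁).mul .rfl)
      _ =ᵐ[μ] μ⟦t₁ | m'⟧ * μ⟦t₂ | m'⟧ := condExp_mul_indicator_one hm' t₁ (hm₂ t₂ ht₂)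

lemma CondIndep.weak_union (hm' : m' ≤ mΩ) (hm₁ : m₁ ≤ mΩ) (hm₂ : m₂ ≤ mΩ)
    (h : CondIndep m' m₁ m₂ hm' μ) (h'' : m' ≤ m'') (h''₂ : m'' ≤ m' ⊔ m₂) :
    CondIndep m'' m₁ (m' ⊔ m₂) (h''₂.trans (sup_le hm' hm₂)) μ := by
  have hsup : m' ⊔ m₂ ≤ mΩ := sup_le hm' hm₂
  rw [condIndep_iff_condExp_sup_ae_eq hm' hm₁ hm₂] at h
  rw [condIndep_iff_condExp_sup_ae_eq _ hm₁ hsup, sup_eq_right.2 h''₂]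
  intro A hA
  calc μ⟦A | m' ⊔ m₂⟧ =ᵐ[μ] μ⟦A | m'⟧ := h A hA
    _ = μ[μ⟦A | m'⟧ | m''] :=
      (condExp_of_stronglyMeasurable (h''₂.trans hsup) (stronglyMeasurable_condExp.mono h'')
        integrable_condExp).symm
    _ =ᵐ[μ] μ[μ⟦A | m' ⊔ m₂⟧ | m''] := condExp_congr_ae (h A hA).symm
    _ =ᵐ[μ] μ⟦A | m''⟧ := condExp_condExp_of_le h''₂ hsup

lemma CondIndep.contraction (hm' : m' ≤ mΩ) (hm₁ : m₁ ≤ mΩ) (hm₂ : m₂ ≤ mΩ)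
    (hm₃ : m₃ ≤ mΩ) (h₂ : CondIndep m' m₁ m₂ hm' μ)
    (h₃ : CondIndep (m' ⊔ m₂) m₁ m₃ (sup_le hm' hm₂) μ) :
    CondIndep m' m₁ (m₂ ⊔ m₃) hm' μ := by
  rw [condIndep_iff_condExp_sup_ae_eq hm' hm₁ hm₂] at h₂
  rw [condIndep_iff_condExp_sup_ae_eq _ hm₁ hm₃] at h₃
  rw [condIndep_iff_condExp_sup_ae_eq hm' hm₁ (sup_le hm₂ hm₃), ← sup_assoc]
  exact fun A hA => (h₃ A hA).trans (h₂ A hA)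

end CondIndep

section Noise

variable {Ω : Type*} {mW mA mB mX mH mH₁ mH₂ mΩ : MeasurableSpace Ω} {μ : Measure Ω}
  [IsFiniteMeasure μ]

lemma condExp_indicator_inter_of_indep (hmX : mX ≤ mΩ) (hmH : mH ≤ mΩ) (hWX : mW ≤ mX)
    (hind : Indep mH mX μ) {E H : Set Ω} (hE : MeasurableSet[mX] E) (hH : MeasurableSet[mH] H) :
    μ⟦E ∩ H | mW⟧ =ᵐ[μ] μ.real H • μ⟦E | mW⟧ := by
  have hH_int : Integrable (H.indicator (1 : Ω → ℝ)) μ :=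
    (integrable_const 1).indicator (hmH H hH)
  have h_inner : μ⟦E ∩ H | mX⟧ =ᵐ[μ] μ.real H • E.indicator (1 : Ω → ℝ) := by
    rw [show (E ∩ H).indicator (fun _ => (1 : ℝ)) = E.indicator 1 * H.indicator 1
      from inter_indicator_one]
    filter_upwards [condExp_stronglyMeasurable_mul_of_bound hmX
        (stronglyMeasurable_one.indicator hE) hH_int 1 (.of_forall fun ω => by
          by_cases hω : ω ∈ E <;> simp [hω]),
      condExp_indep_eq (f := H.indicator (1 : Ω → ℝ)) hmH hmX
        (stronglyMeasurable_one.indicator hH) hind] with ω h₁ h₂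
    rw [h₁, Pi.mul_apply, h₂, integral_indicator_one (hmH H hH), Pi.smul_apply, smul_eq_mul,
      mul_comm]
  calc μ⟦E ∩ H | mW⟧ =ᵐ[μ] μ[μ⟦E ∩ H | mX⟧ | mW] := (condExp_condExp_of_le hWX hmX).symm
    _ =ᵐ[μ] μ[μ.real H • E.indicator (1 : Ω → ℝ) | mW] := condExp_congr_ae h_inner
    _ =ᵐ[μ] μ.real H • μ⟦E | mW⟧ := condExp_smul _ _ _

lemma CondIndep.sup_sup_of_indep [StandardBorelSpace Ω] (hmX : mX ≤ mΩ)
    (hH₁ : mH₁ ≤ mΩ) (hH₂ : mH₂ ≤ mΩ) (hWX : mW ≤ mX) (hAX : mA ≤ mX) (hBX : mB ≤ mX)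
    (hH : Indep mH₁ mH₂ μ) (hHX : Indep (mH₁ ⊔ mH₂) mX μ)
    (h : CondIndep mW mA mB (hWX.trans hmX) μ) :
    CondIndep mW (mA ⊔ mH₁) (mB ⊔ mH₂) (hWX.trans hmX) μ := by
  have h_meas : ∀ {m₁ m₂ : MeasurableSpace Ω}, m₁ ≤ mΩ → m₂ ≤ mΩ →
      ∀ s ∈ image2 (· ∩ ·) {s | MeasurableSet[m₁] s} {s | MeasurableSet[m₂] s},
        MeasurableSet[mΩ] s := by
    rintro m₁ m₂ h₁ h₂ _ ⟨s₁, hs₁, s₂, hs₂, rfl⟩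
    exact (h₁ s₁ hs₁).inter (h₂ s₂ hs₂)
  have hmA := hAX.trans hmX
  have hmB := hBX.trans hmX
  rw [condIndep_iff _ _ _ _ hmA hmB] at h
  rw [← MeasurableSpace.generateFrom_image2_inter mA mH₁,
    ← MeasurableSpace.generateFrom_image2_inter mB mH₂]
  refine CondIndepSets.condIndep' (h_meas hmA hH₁) (h_meas hmB hH₂)
    ((@MeasurableSpace.isPiSystem_measurableSet Ω mA).image2_inter
      (@MeasurableSpace.isPiSystem_measurableSet Ω mH₁))
    ((@MeasurableSpace.isPiSystem_measurableSet Ω mB).image2_inter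
      (@MeasurableSpace.isPiSystem_measurableSet Ω mH₂)) ?_
  rw [condIndepSets_iff _ _ _ _ (h_meas hmA hH₁) (h_meas hmB hH₂)]
  rintro _ _ ⟨a, ha, h₁, hh₁, rfl⟩ ⟨b, hb, h₂, hh₂, rfl⟩
  have hH₁X : Indep mH₁ mX μ := indep_of_indep_of_le_left hHX le_sup_left
  have hH₂X : Indep mH₂ mX μ := indep_of_indep_of_le_left hHX le_sup_right
  filter_upwards [condExp_indicator_inter_of_indep hmX (sup_le hH₁ hH₂) hWX hHX
      ((hAX a ha).inter (hBX b hb)) (MeasurableSet.inter (le_sup_left (b := mH₂) h₁ hh₁)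
        (le_sup_right (a := mH₁) h₂ hh₂)),
    h a b ha hb, condExp_indicator_inter_of_indep hmX hH₁ hWX hH₁X (hAX a ha) hh₁,
    condExp_indicator_inter_of_indep hmX hH₂ hWX hH₂X (hBX b hb) hh₂] with ω h₁₂ hab ha₁ hb₂
  have hμ : μ.real (h₁ ∩ h₂) = μ.real h₁ * μ.real h₂ := by
    rw [measureReal_def, (Indep_iff _ _ _).1 hH h₁ h₂ hh₁ hh₂, ENNReal.toReal_mul]; rfl
  simp only [inter_inter_inter_comm a h₁, h₁₂, hab, ha₁, hb₂, hμ, Pi.smul_apply, Pi.mul_apply,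
    smul_eq_mul]
  ring

end Noise

section WeakUnion

variable {Ω : Type*} {mW mA mB mQ mG mZ mΩ : MeasurableSpace Ω} [StandardBorelSpace Ω]
  {μ : Measure Ω} [IsFiniteMeasure μ]

lemma CondIndep.cond_sup_of_le (hW : mW ≤ mΩ) (hA : mA ≤ mΩ) (hB : mB ≤ mΩ) (hQ : mQ ≤ mΩ)
    (h : CondIndep mW mA mB hW μ) (hQA : mQ ≤ mA) (hQG : mQ ≤ mG) (hG : mG ≤ mW ⊔ mQ ⊔ mB)
    (hZ : mZ ≤ mW ⊔ mQ ⊔ mB) :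
    CondIndep (mG ⊔ mW) mA mZ (sup_le (hG.trans (sup_le (sup_le hW hQ) hB)) hW) μ := by
  have h₁ := h.symm.weak_union hW hB hA (m'' := mW ⊔ mQ) le_sup_left (sup_le_sup_left hQA _)
  have h₂ := h₁.symm.weak_union (sup_le hW hQ) (sup_le hW hA) hB (m'' := mG ⊔ mW)
    (sup_le le_sup_right (hQG.trans le_sup_left)) (sup_le hG (le_sup_left.trans le_sup_left))
  exact condIndep_of_condIndep_of_le_right (condIndep_of_condIndep_of_le_left h₂ le_sup_right) hZ

end WeakUnion

end ProbabilityTheory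

section SigmaOf

variable {Ω ι β : Type*} [MeasurableSpace β]

abbrev sigmaOf (Z : ι → Ω → β) (S : Set ι) : MeasurableSpace Ω :=
  ⨆ j ∈ S, MeasurableSpace.comap (Z j) inferInstance

variable {Z : ι → Ω → β} {S : Set ι} {m : MeasurableSpace Ω}

lemma sigmaOf_le_iff : sigmaOf Z S ≤ m ↔ ∀ j ∈ S, Measurable[m] (Z j) := by
  simp only [sigmaOf, iSup₂_le_iff, measurable_iff_comap_le]

lemma measurable_sigmaOf {j : ι} (hj : j ∈ S) : Measurable[sigmaOf Z S] (Z j) :=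
  sigmaOf_le_iff.1 le_rfl j hj

lemma sigmaOf_empty : sigmaOf Z ∅ = ⊥ := by simp [sigmaOf]

lemma sigmaOf_le_comap_pi :
    sigmaOf Z S ≤ MeasurableSpace.comap (fun ω j => Z j ω) inferInstance :=
  sigmaOf_le_iff.2 fun j _ =>
    (measurable_pi_apply j).comp (comap_measurable (m := MeasurableSpace.pi) fun ω j => Z j ω)

lemma comap_pi_le_iff :
    MeasurableSpace.comap (fun ω j => Z j ω) inferInstance ≤ m ↔ ∀ j, Measurable[m] (Z j) := by
  simp only [MeasurableSpace.comap_process_pi, iSup_le_iff, measurable_iff_comap_le]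

end SigmaOf

/-- The keys are only assumed independent as a family indexed by `Fin (T + 1)`. -/
abbrev keysOn {Ω 𝓚 : Type*} [MeasurableSpace 𝓚] (T : ℕ) (F : ℕ → Ω → 𝓚) (S : Set ℕ) :
    MeasurableSpace Ω :=
  sigmaOf (fun i : Fin (T + 1) => F i) {i | (i : ℕ) ∈ S}

lemma measurable_keysOn {Ω 𝓚 : Type*} [MeasurableSpace 𝓚] {T : ℕ} {F : ℕ → Ω → 𝓚} {S : Set ℕ}
    {j : ℕ} (hj : j ∈ S) (hjT : j ≤ T) : Measurable[keysOn T F S] (F j) :=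
  measurable_sigmaOf (Z := fun i : Fin (T + 1) => F i) (j := ⟨j, Nat.lt_succ_of_le hjT⟩) hj

lemma measurable_of_recursion {Ω α 𝓚 𝓨 : Type*} {m : MeasurableSpace Ω} [MeasurableSpace α]
    [MeasurableSpace 𝓚] [MeasurableSpace 𝓨] {U V : ℕ → Ω → α} {F : ℕ → Ω → 𝓚} {Y : ℕ → Ω → 𝓨}
    {f : (t : ℕ) → α × α × (Fin t → 𝓨) × 𝓚 → 𝓨} (hf : ∀ t, Measurable (f t)) {a n : ℕ}
    (hrec : ∀ j, a ≤ j → j < n → ∀ ω, Y j ω = f j (U j ω, V j ω, fun i : Fin j => Y i ω, F j ω))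
    (hY : ∀ j < a, Measurable[m] (Y j))
    (hin : ∀ j, a ≤ j → j < n →
      Measurable[m] (U j) ∧ Measurable[m] (V j) ∧ Measurable[m] (F j)) :
    ∀ j < n, Measurable[m] (Y j) := by
  intro j
  induction j using Nat.strong_induction_on with
  | _ j ih =>
    intro hjn
    rcases lt_or_ge j a with hja | haj
    · exact hY j hja
    obtain ⟨hU, hV, hF⟩ := hin j haj hjn
    rw [funext (hrec j haj hjn)]
    exact (hf j).comp (hU.prodMk (hV.prodMk
      ((measurable_pi_lambda _ fun i : Fin j => ih i i.2 (i.2.trans hjn)).prodMk hF)))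

section Markov

variable {Ω β : Type*} {mΩ : MeasurableSpace Ω} [StandardBorelSpace Ω] [MeasurableSpace β]
  {μ : Measure Ω} [IsFiniteMeasure μ]

lemma condIndep_past_future_of_markov {X : ℕ → Ω → β} (hX : ∀ t, Measurable (X t)) {n : ℕ}
    (hMarkov : ∀ t, 1 ≤ t → t < n →
      CondIndepFun (MeasurableSpace.comap (X t) inferInstance) (hX t).comap_le
        (fun ω (j : Fin t) => X j ω) (X (t + 1)) μ)
    {s u : ℕ} (hsu : s ≤ u) (hun : u ≤ n) :
    CondIndep (MeasurableSpace.comap (X s) inferInstance) (sigmaOf X (Iio s))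
      (sigmaOf X (Ioc s u)) (hX s).comap_le μ := by
  have hσ : ∀ S, sigmaOf X S ≤ mΩ := fun S => sigmaOf_le_iff.2 fun j _ => hX j
  rcases Nat.eq_zero_or_pos s with rfl | hs
  · rw [show Iio 0 = ∅ by simp, sigmaOf_empty]
    exact condIndep_bot_left _
  induction u, hsu using Nat.le_induction with
  | base =>
    rw [Ioc_self, sigmaOf_empty]
    exact condIndep_bot_right _
  | succ u hsu ih =>
    have hpast : MeasurableSpace.comap (fun ω (j : Fin u) => X j ω) inferInstance ≤ mΩ :=
      (measurable_pi_lambda _ fun j : Fin u => hX j).comap_le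
    have h_le : ∀ j ≤ u, Measurable[MeasurableSpace.comap (X u) inferInstance ⊔
        MeasurableSpace.comap (fun ω (j : Fin u) => X j ω) inferInstance] (X j) := by
      intro j hj
      rcases hj.lt_or_eq with hj | rfl
      · exact ((measurable_pi_apply ⟨j, hj⟩).comp (comap_measurable (m := MeasurableSpace.pi)
          fun ω (i : Fin u) => X i ω)).mono le_sup_right le_rfl
      · exact (comap_measurable _).mono le_sup_left le_rfl
    have h_markov := (condIndepFun_iff_condIndep _ (hX u).comap_le _ _ μ).1
      (hMarkov u (hs.trans_le hsu) (by omega))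
    have h_cond_lo : MeasurableSpace.comap (X u) inferInstance
        ≤ MeasurableSpace.comap (X s) inferInstance ⊔ sigmaOf X (Ioc s u) := by
      rcases hsu.lt_or_eq with hsu | rfl
      · exact (measurable_sigmaOf (Z := X) (S := Ioc s u) ⟨hsu, le_rfl⟩).comap_le.trans
          le_sup_right
      · exact le_sup_left
    have h_cond_hi := sup_le (h_le s hsu).comap_le
      (sigmaOf_le_iff.2 fun j (hj : j ∈ Ioc s u) => h_le j hj.2)
    have h_next := condIndep_of_condIndep_of_le_left
      (h_markov.symm.weak_union (hX u).comap_le (hX (u + 1)).comap_le hpast h_cond_lo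
        h_cond_hi).symm
      (sigmaOf_le_iff.2 fun j hj => h_le j (lt_of_lt_of_le hj hsu).le)
    refine condIndep_of_condIndep_of_le_right
      ((ih (by omega)).contraction (hX s).comap_le (hσ _) (hσ _) (hX (u + 1)).comap_le h_next)
      (sigmaOf_le_iff.2 fun j hj => ?_)
    rcases hj.2.lt_or_eq with hju | rfl
    · exact (measurable_sigmaOf (S := Ioc s u) ⟨hj.1, Nat.lt_succ_iff.1 hju⟩).mono
        le_sup_left le_rfl
    · exact (comap_measurable _).mono le_sup_right le_rfl

end Markov

lemma latest_eq_of_le_of_le {P : Set ℕ} {τ : ℕ → ℕ}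
    (hτ : ∀ t : ℕ, τ t ∈ P ∧ τ t ≤ t ∧ ∀ i ∈ P, i ≤ t → i ≤ τ t) {j t : ℕ}
    (hj : τ t ≤ j) (hjt : j ≤ t) : τ j = τ t :=
  le_antisymm ((hτ t).2.2 _ (hτ j).1 ((hτ j).2.1.trans hjt)) ((hτ j).2.2 _ (hτ t).1 hj)

section Queries

variable {Ω α 𝓚 𝓨 : Type*} [MeasurableSpace α] [MeasurableSpace 𝓚]
  [MeasurableSpace 𝓨] {T : ℕ} {X : ℕ → Ω → α} {F : ℕ → Ω → 𝓚} {Y : ℕ → Ω → 𝓨}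
  {f : (t : ℕ) → α × α × (Fin t → 𝓨) × 𝓚 → 𝓨} {τ : ℕ → ℕ}

lemma measurable_query_of_lt (hf : ∀ t, Measurable (f t)) (hτ : ∀ t, τ t ≤ t)
    (hrec : ∀ t : ℕ, t ≤ T → ∀ ω,
      Y t ω = f t (X (τ t) ω, X t ω, fun j : Fin t => Y j ω, F t ω))
    {s : ℕ} (hsT : s ≤ T) :
    ∀ j < s, Measurable[sigmaOf X (Iio s) ⊔ keysOn T F (Iio s)]
      (Y j) :=
  measurable_of_recursion (U := fun j => X (τ j)) hf (a := 0)
    (fun j _ hj => hrec j (by omega)) (fun j hj => absurd hj (Nat.not_lt_zero j))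
    fun j _ hj => ⟨(measurable_sigmaOf (Z := X) (S := Iio s) (lt_of_le_of_lt (hτ j) hj)).mono
        le_sup_left le_rfl,
      (measurable_sigmaOf (Z := X) (S := Iio s) hj).mono le_sup_left le_rfl,
      (measurable_keysOn (T := T) (F := F) (S := Iio s) hj (by omega)).mono le_sup_right le_rfl⟩

lemma measurable_query_of_mem_Icc (hf : ∀ t, Measurable (f t))
    (hrec : ∀ t : ℕ, t ≤ T → ∀ ω,
      Y t ω = f t (X (τ t) ω, X t ω, fun j : Fin t => Y j ω, F t ω))
    {s t : ℕ} (htT : t ≤ T) (hτ : ∀ j, s ≤ j → j ≤ t → τ j = s) :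
    ∀ j, s ≤ j → j ≤ t → Measurable[MeasurableSpace.comap (X s) inferInstance ⊔ sigmaOf Y (Iio s)
      ⊔ (sigmaOf X (Ioc s t) ⊔ keysOn T F (Icc s t))] (Y j) := by
  intro j hsj hjt
  refine measurable_of_recursion (U := fun j => X (τ j)) hf (a := s) (n := t + 1)
    (fun j _ hj => hrec j (by omega))
    (fun j hj => (measurable_sigmaOf (Z := Y) (S := Iio s) hj).mono
      (le_sup_right.trans le_sup_left) le_rfl)
    (fun j hsj hjt => ⟨?_, ?_, ?_⟩) j (Nat.lt_succ_of_le hjt)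
  · simp only [hτ j hsj (Nat.le_of_lt_succ hjt)]
    exact (comap_measurable _).mono (le_sup_left.trans le_sup_left) le_rfl
  · rcases hsj.lt_or_eq with hsj | rfl
    · exact (measurable_sigmaOf (Z := X) (S := Ioc s t) ⟨hsj, Nat.le_of_lt_succ hjt⟩).mono
        (le_sup_left.trans le_sup_right) le_rfl
    · exact (comap_measurable _).mono (le_sup_left.trans le_sup_left) le_rfl
  · exact (measurable_keysOn (F := F) (S := Icc s t) ⟨hsj, Nat.le_of_lt_succ hjt⟩ (by omega)).mono
      (le_sup_right.trans le_sup_right) le_rfl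

lemma condIndep_past_future_with_keys [MeasurableSpace Ω] [StandardBorelSpace Ω]
    {μ : Measure Ω} [IsFiniteMeasure μ] (hX : ∀ t, Measurable (X t)) (hF : ∀ t, Measurable (F t))
    (hMarkov : ∀ t : ℕ, 1 ≤ t → t < T →
      CondIndepFun (MeasurableSpace.comap (X t) inferInstance) (hX t).comap_le
        (fun ω => fun j : Fin t => X j ω) (X (t + 1)) μ)
    (hFiIndep : iIndepFun (fun t : Fin (T + 1) => F t) μ)
    (hFXIndep : IndepFun (fun ω => fun t : Fin (T + 1) => F t ω)
      (fun ω => fun t : Fin (T + 1) => X t ω) μ)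
    {s t : ℕ} (hst : s ≤ t) (htT : t ≤ T) :
    CondIndep (MeasurableSpace.comap (X s) inferInstance)
      (sigmaOf X (Iio s) ⊔ keysOn T F (Iio s))
      (sigmaOf X (Ioc s t) ⊔ keysOn T F (Icc s t))
      (hX s).comap_le μ := by
  have hX_pi : ∀ j ≤ T, Measurable[MeasurableSpace.comap (fun ω => fun t : Fin (T + 1) => X t ω)
      inferInstance] (X j) := fun j hj =>
    (measurable_pi_apply (⟨j, by omega⟩ : Fin (T + 1))).comp
      (comap_measurable (m := MeasurableSpace.pi) fun ω (i : Fin (T + 1)) => X i ω)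
  have hF_le : ∀ S, sigmaOf (fun i : Fin (T + 1) => F i) S ≤ ‹_› :=
    fun S => sigmaOf_le_iff.2 fun i _ => hF i
  have h_keys : Indep (keysOn T F (Iio s))
      (keysOn T F (Icc s t)) μ :=
    indep_iSup_of_disjoint (fun i : Fin (T + 1) => (hF i).comap_le)
      ((iIndepFun_iff_iIndep _ (fun i : Fin (T + 1) => F i) μ).1 hFiIndep)
      (disjoint_left.2 fun i (h₁ : (i : ℕ) < s) (h₂ : s ≤ (i : ℕ) ∧ (i : ℕ) ≤ t) =>
        absurd h₂.1 (not_le.2 h₁))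
  exact (condIndep_past_future_of_markov hX hMarkov hst htT).sup_sup_of_indep
    (measurable_pi_lambda _ fun j : Fin (T + 1) => hX j).comap_le (hF_le _) (hF_le _)
    (hX_pi s (by omega)).comap_le (sigmaOf_le_iff.2 fun j hj => hX_pi j (by simp at hj; omega))
    (sigmaOf_le_iff.2 fun j hj => hX_pi j (by simp at hj; omega)) h_keys
    (indep_of_indep_of_le_left ((IndepFun_iff_Indep _ _ μ).1 hFXIndep)
      (sup_le sigmaOf_le_comap_pi sigmaOf_le_comap_pi))

lemma condIndep_query_past_given_latest [MeasurableSpace Ω] [StandardBorelSpace Ω]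
    {μ : Measure Ω} [IsFiniteMeasure μ] (hX : ∀ t, Measurable (X t))
    (hF : ∀ t, Measurable (F t)) (hY : ∀ t, Measurable (Y t)) (hf : ∀ t, Measurable (f t))
    (hMarkov : ∀ t : ℕ, 1 ≤ t → t < T →
      CondIndepFun (MeasurableSpace.comap (X t) inferInstance) (hX t).comap_le
        (fun ω => fun j : Fin t => X j ω) (X (t + 1)) μ)
    (hFiIndep : iIndepFun (fun t : Fin (T + 1) => F t) μ)
    (hFXIndep : IndepFun (fun ω => fun t : Fin (T + 1) => F t ω)
      (fun ω => fun t : Fin (T + 1) => X t ω) μ)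
    {P : Set ℕ} (hτ : ∀ t : ℕ, τ t ∈ P ∧ τ t ≤ t ∧ ∀ i ∈ P, i ≤ t → i ≤ τ t)
    (hrec : ∀ t : ℕ, t ≤ T → ∀ ω,
      Y t ω = f t (X (τ t) ω, X t ω, fun j : Fin t => Y j ω, F t ω))
    {t : ℕ} (htT : t ≤ T) :
    CondIndep (MeasurableSpace.comap (fun ω => fun j : Fin t => Y j ω) inferInstance
        ⊔ MeasurableSpace.comap (X (τ t)) inferInstance)
      (MeasurableSpace.comap (Y t) inferInstance) (sigmaOf X (Iio (τ t)))
      (sup_le (measurable_pi_lambda _ fun j : Fin t => hY j).comap_le (hX (τ t)).comap_le) μ := by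
  have hτt := (hτ t).2.1
  have h_early := measurable_query_of_lt hf (fun t => (hτ t).2.1) hrec (hτt.trans htT)
  have h_late := measurable_query_of_mem_Icc hf hrec htT
    fun j h₁ h₂ => latest_eq_of_le_of_le hτ h₁ h₂
  have h_past : ∀ j < τ t, Measurable[MeasurableSpace.comap
      (fun ω => fun j : Fin t => Y j ω) inferInstance] (Y j) := fun j hj =>
    (measurable_pi_apply (⟨j, hj.trans_le hτt⟩ : Fin t)).comp
      (comap_measurable (m := MeasurableSpace.pi) fun ω (i : Fin t) => Y i ω)
  refine (condIndep_of_condIndep_of_le_left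
    ((condIndep_past_future_with_keys hX hF hMarkov hFiIndep hFXIndep hτt htT).cond_sup_of_le
      (hX _).comap_le ?_ ?_ (sigmaOf_le_iff.2 fun j _ => hY j) (sigmaOf_le_iff.2 h_early)
      (sigmaOf_le_iff.2 h_past) ?_ (measurable_iff_comap_le.1 (h_late t hτt le_rfl)))
    le_sup_left).symm
  · exact sup_le (sigmaOf_le_iff.2 fun j _ => hX j) (sigmaOf_le_iff.2 fun i _ => hF i)
  · exact sup_le (sigmaOf_le_iff.2 fun j _ => hX j) (sigmaOf_le_iff.2 fun i _ => hF i)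
  · refine comap_pi_le_iff.2 fun j : Fin t => ?_
    rcases lt_or_ge (j : ℕ) (τ t) with hj | hj
    · exact (measurable_sigmaOf (Z := Y) (S := Iio (τ t)) hj).mono
        (le_sup_right.trans le_sup_left) le_rfl
    · exact h_late j hj j.2.le

end Queries

theorem trace_level_privacy_general
    {Ω 𝓚 𝓨 : Type*}
    [MeasurableSpace Ω] [StandardBorelSpace Ω]
    [MeasurableSpace 𝓚] [MeasurableSpace 𝓨]
    (μ : Measure Ω) [IsProbabilityMeasure μ]
    (T : ℕ) (K : ℕ)
    (X : ℕ → Ω → Fin K) (hX : ∀ t, Measurable (X t))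
    (hMarkov : ∀ t : ℕ, 1 ≤ t → t ≤ T - 1 →
      CondIndepFun (MeasurableSpace.comap (X t) inferInstance) (hX t).comap_le
        (fun ω => fun j : Fin t => X j ω) (X (t + 1)) μ)
    (P : Set ℕ)
    (τ : ℕ → ℕ)
    (hτ : ∀ t : ℕ, τ t ∈ P ∧ τ t ≤ t ∧ ∀ i ∈ P, i ≤ t → i ≤ τ t)
    (F : ℕ → Ω → 𝓚) (hF : ∀ t, Measurable (F t))
    (hFiIndep : iIndepFun
      (fun t : Fin (T + 1) => F t) μ)
    (hFXIndep : IndepFun (fun ω => fun t : Fin (T + 1) => F t ω)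
      (fun ω => fun t : Fin (T + 1) => X t ω) μ)
    (Y : ℕ → Ω → 𝓨) (hY : ∀ t, Measurable (Y t))
    (f : (t : ℕ) → Fin K × Fin K × (Fin t → 𝓨) × 𝓚 → 𝓨)
    (hf : ∀ t, Measurable (f t))
    (hrec : ∀ t : ℕ, t ≤ T → ∀ ω,
      Y t ω = f t (X (τ t) ω, X t ω, fun j : Fin t => Y j ω, F t ω))
    (hstep : ∀ t : ℕ, t ≤ T →
      CondIndepFun (MeasurableSpace.comap (fun ω => fun j : Fin t => Y j ω) inferInstance)
        (measurable_pi_lambda _ fun j : Fin t => hY j).comap_le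
        (Y t) (X (τ t)) μ) :
    ∀ t : ℕ, t ≤ T →
      CondIndepFun (MeasurableSpace.comap (fun ω => fun j : Fin t => Y j ω) inferInstance)
        (measurable_pi_lambda _ fun j : Fin t => hY j).comap_le
        (Y t) (fun ω => fun j : {j : ℕ // j ∈ P ∧ j ≤ t} => X j ω) μ := by
  intro t ht
  have h_latest := (condIndepFun_iff_condIndep _ _ _ _ μ).1 (hstep t ht)
  have h_past := condIndep_query_past_given_latest hX hF hY hf
    (fun t h₁ h₂ => hMarkov t h₁ (by omega)) hFiIndep hFXIndep hτ hrec ht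
  rw [condIndepFun_iff_condIndep]
  refine condIndep_of_condIndep_of_le_right (h_latest.contraction _ (hY t).comap_le
    (hX _).comap_le (sigmaOf_le_iff.2 fun j _ => hX j) h_past) (comap_pi_le_iff.2 fun j => ?_)
  rcases ((hτ t).2.2 j j.2.1 j.2.2).lt_or_eq with hj | hj
  · exact (measurable_sigmaOf (Z := X) (S := Iio (τ t)) hj).mono le_sup_right le_rfl
  · rw [hj]
    exact (comap_measurable _).mono le_sup_left le_rfl

/-- **Proposition 2 (trace-level privacy).**
Let `X_0, …, X_T` be an inhomogeneous Markov chain with values in `Fin K`, let `P ⊆ ℕ` be the set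
of private times with `0 ∈ P`, and let `τ t = max {i ∈ P : i ≤ t}`. Let `F_0, …, F_T` be fresh
random keys, mutually independent and independent of `(X_0, …, X_T)`, and let the queries be
defined recursively by `Y_t = f_t (X_{τ t}, X_t, (Y_0, …, Y_{t−1}), F_t)`.
If for every `t ∈ {0, …, T}` the query `Y_t` is conditionally independent of `X_{τ t}` given the
past queries `(Y_0, …, Y_{t−1})`, then for every `t ∈ {0, …, T}` the query `Y_t` is conditionally
independent of the whole private trace `(X_j)_{j ∈ P ∩ {0,…,t}}` given `(Y_0, …, Y_{t−1})`. -/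
theorem trace_level_privacy
    {Ω 𝓚 𝓨 : Type*}
    [MeasurableSpace Ω] [StandardBorelSpace Ω] [Nonempty Ω]
    [MeasurableSpace 𝓚] [MeasurableSpace 𝓨]
    (μ : Measure Ω) [IsProbabilityMeasure μ]
    (T : ℕ) (hT : 0 < T) (K : ℕ)
    (X : ℕ → Ω → Fin K) (hX : ∀ t, Measurable (X t))
    (hMarkov : ∀ t : ℕ, 1 ≤ t → t ≤ T - 1 →
      CondIndepFun (MeasurableSpace.comap (X t) inferInstance) (hX t).comap_le
        (fun ω => fun j : Fin t => X j ω) (X (t + 1)) μ)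
    (P : Set ℕ) (h0 : 0 ∈ P)
    (τ : ℕ → ℕ)
    (hτ : ∀ t : ℕ, τ t ∈ P ∧ τ t ≤ t ∧ ∀ i ∈ P, i ≤ t → i ≤ τ t)
    (F : ℕ → Ω → 𝓚) (hF : ∀ t, Measurable (F t))
    (hFiIndep : iIndepFun
      (fun t : Fin (T + 1) => F t) μ)
    (hFXIndep : IndepFun (fun ω => fun t : Fin (T + 1) => F t ω)
      (fun ω => fun t : Fin (T + 1) => X t ω) μ)
    (Y : ℕ → Ω → 𝓨) (hY : ∀ t, Measurable (Y t))
    (f : (t : ℕ) → Fin K × Fin K × (Fin t → 𝓨) × 𝓚 → 𝓨)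
    (hf : ∀ t, Measurable (f t))
    (hrec : ∀ t : ℕ, t ≤ T → ∀ ω,
      Y t ω = f t (X (τ t) ω, X t ω, fun j : Fin t => Y j ω, F t ω))
    (hstep : ∀ t : ℕ, t ≤ T →
      CondIndepFun (MeasurableSpace.comap (fun ω => fun j : Fin t => Y j ω) inferInstance)
        (measurable_pi_lambda _ fun j : Fin t => hY j).comap_le
        (Y t) (X (τ t)) μ) :
    ∀ t : ℕ, t ≤ T →
      CondIndepFun (MeasurableSpace.comap (fun ω => fun j : Fin t => Y j ω) inferInstance)
        (measurable_pi_lambda _ fun j : Fin t => hY j).comap_le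
        (Y t) (fun ω => fun j : {j : ℕ // j ∈ P ∧ j ≤ t} => X j ω) μ :=
  trace_level_privacy_general μ T K X hX hMarkov P τ hτ F hF hFiIndep hFXIndep Y hY f hf hrec hstep
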